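/- Let A be a unital C*-algebra, B ⊆ A a closed ideal, φ : D → A a *-homomorphism, and x ∈ A with x* = −x and [x, φ(D)] ⊆ B. Let U = exp(x), and let (h_t) be an approximate unit for B that is quasicentral for φ(D) and for x, with each h_t a positive contraction in B. Set V_t = exp(h_t x h_t). Then V_t is a unitary in 1 + B, V_t* U − exp(x − h_t x h_t) → 0 in norm, and [V_t* U, φ(d)] → 0 in norm for each d ∈ D. -/

import Mathlib

open Filter Topology NormedSpace

/-!
`V_t` is unitary because `h_t x h_t` is skew-adjoint, and `V_t - 1 ∈ B` because all terms but the
first of the exponential series of `h_t x h_t` lie in the closed ideal `B`.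

The two limits rest on Duhamel-type estimates in a Banach algebra,
`‖exp a exp b - exp (a + b)‖ ≤ e^{2(‖a‖ + ‖b‖)} ‖[a, b]‖` and `‖[exp y, c]‖ ≤ e^{‖y‖} ‖[y, c]‖`,
obtained from the mean value inequality for `s ↦ exp (s a) exp (s b) exp ((1 - s)(a + b))` and
`s ↦ exp (s y) c exp ((1 - s) y)` on `[0, 1]`, whose derivatives are
`exp (s a) [a, exp (s b)] exp ((1 - s)(a + b))` and `exp (s y) [y, c] exp ((1 - s) y)`.
Since `V_t* = exp (-h_t x h_t)`, it remains to see that `[h_t x h_t, x] → 0` and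
`[x - h_t x h_t, φ d] → 0`: quasicentrality reduces `[h_t y h_t, c]` to `h_t [y, c] h_t`, and
`h_t [x, φ d] h_t → [x, φ d]` because `[x, φ d] ∈ B`.
-/

section ApproximateUnit

variable {R : Type*} [NonUnitalNormedRing R] {ι : Type*} {l : Filter ι} {e : ι → R}

theorem norm_mul_mul_self_le {u : R} (hu : ‖u‖ ≤ 1) (y : R) : ‖u * y * u‖ ≤ ‖y‖ :=
  calc ‖u * y * u‖ ≤ ‖u‖ * ‖y‖ * ‖u‖ := norm_mul₃_le
    _ ≤ 1 * ‖y‖ * 1 := by gcongr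
    _ = ‖y‖ := by ring

theorem tendsto_mul_mul_self (he : ∀ i, ‖e i‖ ≤ 1) {b : R}
    (hl : Tendsto (fun i => e i * b) l (𝓝 b)) (hr : Tendsto (fun i => b * e i) l (𝓝 b)) :
    Tendsto (fun i => e i * b * e i) l (𝓝 b) := by
  have hbdd : IsBoundedUnder (· ≤ ·) l (norm ∘ e) := isBoundedUnder_of ⟨1, he⟩
  have hsmall : Tendsto (fun i => e i * (b * e i - b)) l (𝓝 0) :=
    isBoundedUnder_le_mul_tendsto_zero hbdd (by simpa using hr.sub_const b)
  simpa [mul_sub, mul_assoc] using hsmall.add hl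

theorem tendsto_mul_mul_self_commutator (he : ∀ i, ‖e i‖ ≤ 1) {c : R}
    (hc : Tendsto (fun i => e i * c - c * e i) l (𝓝 0)) (y : R) :
    Tendsto (fun i => e i * y * e i * c - c * (e i * y * e i) - e i * (y * c - c * y) * e i)
      l (𝓝 0) := by
  have hleft : IsBoundedUnder (· ≤ ·) l (norm ∘ fun i => e i * y) :=
    isBoundedUnder_of ⟨‖y‖, fun i =>
      (norm_mul_le _ _).trans (mul_le_of_le_one_left (norm_nonneg y) (he i))⟩
  have hright : IsBoundedUnder (· ≤ ·) l (norm ∘ fun i => y * e i) :=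
    isBoundedUnder_of ⟨‖y‖, fun i =>
      (norm_mul_le _ _).trans (mul_le_of_le_one_right (norm_nonneg y) (he i))⟩
  have hsum := (isBoundedUnder_le_mul_tendsto_zero hleft hc).add
    (hc.zero_mul_isBoundedUnder_le hright)
  rw [add_zero] at hsum
  refine hsum.congr fun i => ?_
  noncomm_ring

theorem tendsto_sub_mul_mul_self_commutator (he : ∀ i, ‖e i‖ ≤ 1) {c y : R}
    (hc : Tendsto (fun i => e i * c - c * e i) l (𝓝 0))
    (hl : Tendsto (fun i => e i * (y * c - c * y)) l (𝓝 (y * c - c * y)))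
    (hr : Tendsto (fun i => (y * c - c * y) * e i) l (𝓝 (y * c - c * y))) :
    Tendsto (fun i => (y - e i * y * e i) * c - c * (y - e i * y * e i)) l (𝓝 0) := by
  have hlim := ((tendsto_mul_mul_self he hl hr).const_sub (y * c - c * y)).sub
    (tendsto_mul_mul_self_commutator he hc y)
  rw [sub_self, sub_zero] at hlim
  refine hlim.congr fun i => ?_
  noncomm_ring

end ApproximateUnit

theorem tendsto_commutator_of_tendsto_sub {R : Type*} [NonUnitalRing R] [TopologicalSpace R]
    [IsTopologicalRing R] {ι : Type*} {l : Filter ι} {f g : ι → R} {c : R}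
    (hfg : Tendsto (fun i => f i - g i) l (𝓝 0))
    (hg : Tendsto (fun i => g i * c - c * g i) l (𝓝 0)) :
    Tendsto (fun i => f i * c - c * f i) l (𝓝 0) := by
  have hlim := ((hfg.mul_const c).sub (hfg.const_mul c)).add hg
  rw [zero_mul, mul_zero, sub_zero, add_zero] at hlim
  refine hlim.congr fun i => ?_
  noncomm_ring

section Exp

open Set

variable {𝔸 : Type*} [NormedRing 𝔸] [NormedAlgebra ℝ 𝔸]

theorem norm_exp_le_exp_norm [NormOneClass 𝔸] (x : 𝔸) : ‖exp x‖ ≤ Real.exp ‖x‖ := by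
  have hle : ∀ n : ℕ, ‖(n.factorial⁻¹ : ℝ) • x ^ n‖ ≤ ‖x‖ ^ n / n.factorial := fun n => by
    rw [norm_smul, div_eq_inv_mul, norm_inv, RCLike.norm_natCast]
    gcongr
    exact norm_pow_le x n
  calc ‖exp x‖ = ‖∑' n : ℕ, (n.factorial⁻¹ : ℝ) • x ^ n‖ := by rw [exp_eq_tsum ℝ]
    _ ≤ ∑' n : ℕ, ‖x‖ ^ n / n.factorial :=
      tsum_of_norm_bounded (Real.summable_pow_div_factorial ‖x‖).hasSum hle
    _ = Real.exp ‖x‖ := by rw [Real.exp_eq_exp_ℝ, exp_eq_tsum_div]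

theorem norm_exp_smul_le [NormOneClass 𝔸] {s : ℝ} (hs : 0 ≤ s) (x : 𝔸) :
    ‖exp (s • x)‖ ≤ Real.exp (s * ‖x‖) := by
  simpa [norm_smul, Real.norm_of_nonneg hs] using norm_exp_le_exp_norm (s • x)

variable [CompleteSpace 𝔸]

theorem TwoSidedIdeal.exp_sub_one_mem {B : TwoSidedIdeal 𝔸} (hB : IsClosed (B : Set 𝔸))
    {a : 𝔸} (ha : a ∈ B) : exp a - 1 ∈ B := by
  have hsum : HasSum (fun n : ℕ => ((n + 1).factorial⁻¹ : ℝ) • a ^ (n + 1)) (exp a - 1) := by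
    simpa using (hasSum_nat_add_iff' 1).mpr (exp_series_hasSum_exp' (𝕂 := ℝ) a)
  refine hB.mem_of_tendsto hsum.tendsto_sum_nat (.of_forall fun N => sum_mem fun n _ => ?_)
  rw [pow_succ, ← smul_mul_assoc]
  exact B.mul_mem_left _ _ ha

theorem exp_mem_unitary_of_star_eq_neg [StarRing 𝔸] [ContinuousStar 𝔸] {x : 𝔸}
    (hx : star x = -x) : exp x ∈ unitary 𝔸 :=
  -- `exp` does not depend on a `ℚ`-algebra instance, so any choice of one is harmless here.
  letI : NormedAlgebra ℚ 𝔸 := NormedAlgebra.restrictScalars ℚ ℝ 𝔸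
  exp_mem_unitary_of_mem_skewAdjoint hx

theorem hasDerivAt_exp_one_sub_smul (x : 𝔸) (s : ℝ) :
    HasDerivAt (fun u : ℝ => exp ((1 - u) • x)) (-(x * exp ((1 - s) • x))) s :=
  ((hasDerivAt_exp_smul_const' x (1 - s)).scomp s ((hasDerivAt_id s).const_sub 1)).congr_deriv
    (by simp)

variable [NormOneClass 𝔸]

theorem norm_exp_mul_sub_mul_exp_le (y c : 𝔸) :
    ‖exp y * c - c * exp y‖ ≤ Real.exp ‖y‖ * ‖y * c - c * y‖ := by
  have hderiv : ∀ s : ℝ, HasDerivAt (fun u : ℝ => exp (u • y) * c * exp ((1 - u) • y))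
      (exp (s • y) * (y * c - c * y) * exp ((1 - s) • y)) s := fun s => by
    refine (((hasDerivAt_exp_smul_const y s).mul_const c).mul
      (hasDerivAt_exp_one_sub_smul y s)).congr_deriv ?_
    noncomm_ring
  have hbound : ∀ s ∈ Ico (0 : ℝ) 1,
      ‖exp (s • y) * (y * c - c * y) * exp ((1 - s) • y)‖ ≤ Real.exp ‖y‖ * ‖y * c - c * y‖ := by
    intro s hs
    calc _ ≤ ‖exp (s • y)‖ * ‖y * c - c * y‖ * ‖exp ((1 - s) • y)‖ := norm_mul₃_le
      _ ≤ Real.exp (s * ‖y‖) * ‖y * c - c * y‖ * Real.exp ((1 - s) * ‖y‖) := by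
        gcongr
        exacts [norm_exp_smul_le hs.1 y, norm_exp_smul_le (by linarith [hs.2]) y]
      _ = Real.exp ‖y‖ * ‖y * c - c * y‖ := by
        rw [mul_right_comm, ← Real.exp_add]
        ring_nf
  simpa using norm_image_sub_le_of_norm_deriv_le_segment_01'
    (fun s _ => (hderiv s).hasDerivWithinAt) hbound

theorem norm_exp_mul_exp_sub_exp_add_le (a b : 𝔸) :
    ‖exp a * exp b - exp (a + b)‖ ≤ Real.exp (2 * (‖a‖ + ‖b‖)) * ‖a * b - b * a‖ := by
  have hderiv : ∀ s : ℝ,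
      HasDerivAt (fun u : ℝ => exp (u • a) * exp (u • b) * exp ((1 - u) • (a + b)))
        (exp (s • a) * (a * exp (s • b) - exp (s • b) * a) * exp ((1 - s) • (a + b))) s :=
    fun s => by
    refine (((hasDerivAt_exp_smul_const a s).mul (hasDerivAt_exp_smul_const b s)).mul
      (hasDerivAt_exp_one_sub_smul (a + b) s)).congr_deriv ?_
    simp only [Pi.mul_apply]
    noncomm_ring
  have hcomm : ∀ s ∈ Icc (0 : ℝ) 1,
      ‖a * exp (s • b) - exp (s • b) * a‖ ≤ Real.exp ‖b‖ * ‖a * b - b * a‖ := by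
    intro s hs
    calc _ = ‖exp (s • b) * a - a * exp (s • b)‖ := norm_sub_rev _ _
      _ ≤ Real.exp ‖s • b‖ * ‖s • b * a - a * s • b‖ := norm_exp_mul_sub_mul_exp_le _ _
      _ = Real.exp (s * ‖b‖) * (s * ‖a * b - b * a‖) := by
        rw [norm_smul, Real.norm_of_nonneg hs.1, smul_mul_assoc, mul_smul_comm, ← smul_sub,
          norm_smul, Real.norm_of_nonneg hs.1, norm_sub_rev]
      _ ≤ Real.exp ‖b‖ * ‖a * b - b * a‖ :=
        mul_le_mul (Real.exp_le_exp.mpr (mul_le_of_le_one_left (norm_nonneg b) hs.2))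
          (mul_le_of_le_one_left (norm_nonneg _) hs.2) (mul_nonneg hs.1 (norm_nonneg _))
          (Real.exp_nonneg _)
  have hbound : ∀ s ∈ Ico (0 : ℝ) 1,
      ‖exp (s • a) * (a * exp (s • b) - exp (s • b) * a) * exp ((1 - s) • (a + b))‖ ≤
        Real.exp (2 * (‖a‖ + ‖b‖)) * ‖a * b - b * a‖ := by
    intro s hs
    calc _ ≤ ‖exp (s • a)‖ * ‖a * exp (s • b) - exp (s • b) * a‖ * ‖exp ((1 - s) • (a + b))‖ :=
          norm_mul₃_le
      _ ≤ Real.exp (s * ‖a‖) * (Real.exp ‖b‖ * ‖a * b - b * a‖) *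
            Real.exp ((1 - s) * ‖a + b‖) := by
        gcongr
        exacts [norm_exp_smul_le hs.1 a, hcomm s (Ico_subset_Icc_self hs),
          norm_exp_smul_le (by linarith [hs.2]) (a + b)]
      _ ≤ Real.exp ‖a‖ * (Real.exp ‖b‖ * ‖a * b - b * a‖) * Real.exp (‖a‖ + ‖b‖) := by
        gcongr
        · exact mul_le_of_le_one_left (norm_nonneg a) hs.2.le
        · exact (mul_le_of_le_one_left (norm_nonneg _) (by linarith [hs.1])).trans
            (norm_add_le a b)
      _ = Real.exp (2 * (‖a‖ + ‖b‖)) * ‖a * b - b * a‖ := by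
        simp only [two_mul, Real.exp_add]
        ring
  simpa using norm_image_sub_le_of_norm_deriv_le_segment_01'
    (fun s _ => (hderiv s).hasDerivWithinAt) hbound

variable {ι : Type*} {l : Filter ι}

theorem tendsto_exp_mul_exp_sub_exp_add {a b : ι → 𝔸} {M : ℝ}
    (ha : ∀ i, ‖a i‖ ≤ M) (hb : ∀ i, ‖b i‖ ≤ M)
    (hab : Tendsto (fun i => a i * b i - b i * a i) l (𝓝 0)) :
    Tendsto (fun i => exp (a i) * exp (b i) - exp (a i + b i)) l (𝓝 0) := by
  have hbound := (tendsto_zero_iff_norm_tendsto_zero.mp hab).const_mul (Real.exp (2 * (M + M)))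
  rw [mul_zero] at hbound
  refine squeeze_zero_norm (fun i => (norm_exp_mul_exp_sub_exp_add_le (a i) (b i)).trans ?_) hbound
  gcongr
  exacts [ha i, hb i]

theorem tendsto_exp_mul_sub_mul_exp {y : ι → 𝔸} {M : ℝ} (hy : ∀ i, ‖y i‖ ≤ M) {c : 𝔸}
    (hyc : Tendsto (fun i => y i * c - c * y i) l (𝓝 0)) :
    Tendsto (fun i => exp (y i) * c - c * exp (y i)) l (𝓝 0) := by
  have hbound := (tendsto_zero_iff_norm_tendsto_zero.mp hyc).const_mul (Real.exp M)
  rw [mul_zero] at hbound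
  refine squeeze_zero_norm (fun i => (norm_exp_mul_sub_mul_exp_le (y i) c).trans ?_) hbound
  gcongr
  exact hy i

end Exp

/-- Lemma 9.2 of the paper: with `U = exp x` and `V_t = exp (h_t x h_t)`,
each `V_t` is a unitary in `1 + B`, `V_t* U - exp (x - h_t x h_t) → 0`, and
`[V_t* U, φ d] → 0` for every `d`. -/
theorem stmt7 {A D : Type*} [CStarAlgebra A] [PartialOrder A] [StarOrderedRing A]
    [NonUnitalCStarAlgebra D]
    (B : TwoSidedIdeal A) (hBclosed : IsClosed (B : Set A))
    (φ : D →⋆ₙₐ[ℂ] A) (x : A) (hx : star x = -x)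
    (hxB : ∀ d : D, x * φ d - φ d * x ∈ B)
    (h : ℕ → A) (hmem : ∀ t, h t ∈ B) (hpos : ∀ t, 0 ≤ h t) (hcontr : ∀ t, ‖h t‖ ≤ 1)
    (happrox : ∀ b ∈ B, Tendsto (fun t => h t * b) atTop (𝓝 b) ∧
      Tendsto (fun t => b * h t) atTop (𝓝 b))
    (hqcφ : ∀ d : D, Tendsto (fun t => h t * φ d - φ d * h t) atTop (𝓝 0))
    (hqcx : Tendsto (fun t => h t * x - x * h t) atTop (𝓝 0)) :
    (∀ t, exp (h t * x * h t) ∈ unitary A ∧ exp (h t * x * h t) - 1 ∈ B) ∧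
    Tendsto (fun t => star (exp (h t * x * h t)) * exp x - exp (x - h t * x * h t))
      atTop (𝓝 0) ∧
    ∀ d : D, Tendsto (fun t =>
        (star (exp (h t * x * h t)) * exp x) * φ d -
          φ d * (star (exp (h t * x * h t)) * exp x)) atTop (𝓝 0) := by
  have hskew : ∀ t, star (h t * x * h t) = -(h t * x * h t) := fun t => by
    rw [star_mul, star_mul, (hpos t).isSelfAdjoint.star_eq, hx]
    noncomm_ring
  have hstar : ∀ t, star (exp (h t * x * h t)) = exp (-(h t * x * h t)) := fun t => by
    rw [star_exp, hskew]
  refine ⟨fun t => ⟨exp_mem_unitary_of_star_eq_neg (hskew t),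
    B.exp_sub_one_mem hBclosed (B.mul_mem_left _ _ (hmem t))⟩, ?_⟩
  -- a nontrivial C⋆-algebra has `‖1‖ = 1`, which the exponential estimates need
  nontriviality A
  have hnorm : ∀ t, ‖h t * x * h t‖ ≤ ‖x‖ := fun t => norm_mul_mul_self_le (hcontr t) x
  have hprod : Tendsto (fun t => exp (-(h t * x * h t)) * exp x - exp (x - h t * x * h t))
      atTop (𝓝 0) := by
    have hcomm := (tendsto_mul_mul_self_commutator hcontr hqcx x).neg
    rw [neg_zero] at hcomm
    simpa [neg_add_eq_sub] using tendsto_exp_mul_exp_sub_exp_add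
      (fun t => (norm_neg _).trans_le (hnorm t)) (fun _ => le_rfl)
      (hcomm.congr fun t => by noncomm_ring)
  refine ⟨by simpa only [hstar] using hprod, fun d => ?_⟩
  have hrest := tendsto_sub_mul_mul_self_commutator hcontr (hqcφ d)
    (happrox _ (hxB d)).1 (happrox _ (hxB d)).2
  simp only [hstar]
  exact tendsto_commutator_of_tendsto_sub hprod <| tendsto_exp_mul_sub_mul_exp
    (fun t => (norm_sub_le _ _).trans (add_le_add le_rfl (hnorm t))) hrest
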